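/- In the classical realisation on ℝ⁶, the following hold: {C_{23}, C_{12} + C_{13}} = 0, {C_{12}, C_{13} + C_{23}} = 0, and {C_{13}, C_{12} + C_{23}} = 0. -/

import Mathlib

/-!
Up to an additive constant, `C₁₂ + C₁₃ + C₂₃` is the total Casimir `C₁₂₃`, so it
Poisson-commutes with every `C_ij`; this is checked by evaluating the bracket on the explicit
differential of `C_ij`. Since `{C_ij, C_ij} = 0`, removing `C_ij` from the sum leaves a bracket
that still vanishes.
-/

open Finset

/-- Canonical Poisson bracket on the phase space ℝ²ⁿ. -/
noncomputable def pb (n : ℕ) (f g : (Fin n → ℝ) → (Fin n → ℝ) → ℝ)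
    (x p : Fin n → ℝ) : ℝ :=
  ∑ j, (deriv (fun t => f (Function.update x j t) p) (x j) *
        deriv (fun t => g x (Function.update p j t)) (p j) -
        deriv (fun t => f x (Function.update p j t)) (p j) *
        deriv (fun t => g (Function.update x j t) p) (x j))

/-- The two-index Racah generator `C_{ij}` in the classical realisation. -/
noncomputable def Cij (n : ℕ) (a : Fin n → ℝ) (i j : Fin n)
    (x p : Fin n → ℝ) : ℝ :=
  -(1 / 4) * ((x i * p j - x j * p i) ^ 2 + a i * (x j) ^ 2 / (x i) ^ 2 +
    a j * (x i) ^ 2 / (x j) ^ 2 + a i + a j)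

open Function

section PoissonBracket

variable {n : ℕ} {f g g₁ g₂ : (Fin n → ℝ) → (Fin n → ℝ) → ℝ}
  {x p : Fin n → ℝ}

theorem pb_self : pb n f f x p = 0 := by
  simp only [pb, mul_comm, sub_self, sum_const_zero]

theorem pb_sub_right
    (h₁x : ∀ k, DifferentiableAt ℝ (fun t => g₁ (update x k t) p) (x k))
    (h₁p : ∀ k, DifferentiableAt ℝ (fun t => g₁ x (update p k t)) (p k))
    (h₂x : ∀ k, DifferentiableAt ℝ (fun t => g₂ (update x k t) p) (x k))
    (h₂p : ∀ k, DifferentiableAt ℝ (fun t => g₂ x (update p k t)) (p k)) :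
    pb n f (fun x p => g₁ x p - g₂ x p) x p = pb n f g₁ x p - pb n f g₂ x p := by
  simp only [pb, ← sum_sub_distrib]
  refine sum_congr rfl fun k _ => ?_
  rw [deriv_fun_sub (h₁x k) (h₂x k), deriv_fun_sub (h₁p k) (h₂p k)]
  ring

theorem pb_eq_sum_of_hasDerivAt {dfx dfp dgx dgp : Fin n → ℝ}
    (hfx : ∀ k, HasDerivAt (fun t => f (update x k t) p) (dfx k) (x k))
    (hfp : ∀ k, HasDerivAt (fun t => f x (update p k t)) (dfp k) (p k))
    (hgx : ∀ k, HasDerivAt (fun t => g (update x k t) p) (dgx k) (x k))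
    (hgp : ∀ k, HasDerivAt (fun t => g x (update p k t)) (dgp k) (p k)) :
    pb n f g x p = ∑ k, (dfx k * dgp k - dfp k * dgx k) := by
  simp only [pb, (hfx _).deriv, (hfp _).deriv, (hgx _).deriv, (hgp _).deriv]

end PoissonBracket

noncomputable def dCij (n : ℕ) (a : Fin n → ℝ) (i j : Fin n)
    (x p u v : Fin n → ℝ) : ℝ :=
  -(1 / 4) * (2 * (x i * p j - x j * p i) * (u i * p j + x i * v j - u j * p i - x j * v i) +
    2 * a i * x j * (u j * x i - x j * u i) / x i ^ 3 +
    2 * a j * x i * (u i * x j - x i * u j) / x j ^ 3)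

section Derivatives

variable {n : ℕ} (a : Fin n → ℝ)

theorem hasDerivAt_Cij_comp {i j : Fin n} {γx γp : ℝ → Fin n → ℝ} {u v : Fin n → ℝ}
    {t : ℝ} (hγx : HasDerivAt γx u t) (hγp : HasDerivAt γp v t) (hi : γx t i ≠ 0)
    (hj : γx t j ≠ 0) :
    HasDerivAt (fun s => Cij n a i j (γx s) (γp s)) (dCij n a i j (γx t) (γp t) u v) t := by
  have hxi := hasDerivAt_pi.1 hγx i
  have hxj := hasDerivAt_pi.1 hγx j
  have hpi := hasDerivAt_pi.1 hγp i
  have hpj := hasDerivAt_pi.1 hγp j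
  have hL := ((hxi.mul hpj).sub (hxj.mul hpi)).pow 2
  have hQi := ((hxj.pow 2).const_mul (a i)).div (hxi.pow 2) (pow_ne_zero 2 hi)
  have hQj := ((hxi.pow 2).const_mul (a j)).div (hxj.pow 2) (pow_ne_zero 2 hj)
  refine (((((hL.add hQi).add hQj).add_const (a i)).add_const (a j)).const_mul
    (-(1 / 4) : ℝ)).congr_deriv ?_
  simp only [dCij, Pi.mul_apply, Pi.sub_apply, Pi.pow_apply]
  field_simp
  ring

theorem hasDerivAt_Cij_update_x {x p : Fin n → ℝ} (i j : Fin n) (hi : x i ≠ 0)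
    (hj : x j ≠ 0) (k : Fin n) :
    HasDerivAt (fun t => Cij n a i j (update x k t) p)
      (dCij n a i j x p (Pi.single k 1) 0) (x k) := by
  simpa using hasDerivAt_Cij_comp a (hasDerivAt_update x k (x k)) (hasDerivAt_const (x k) p)
    (by simpa using hi) (by simpa using hj)

theorem hasDerivAt_Cij_update_p {x p : Fin n → ℝ} (i j : Fin n) (hi : x i ≠ 0)
    (hj : x j ≠ 0) (k : Fin n) :
    HasDerivAt (fun t => Cij n a i j x (update p k t))
      (dCij n a i j x p 0 (Pi.single k 1)) (p k) := by
  simpa using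
    hasDerivAt_Cij_comp a (hasDerivAt_const (p k) x) (hasDerivAt_update p k (p k)) hi hj

end Derivatives

noncomputable def Csum (a : Fin 3 → ℝ) (x p : Fin 3 → ℝ) : ℝ :=
  Cij 3 a 0 1 x p + Cij 3 a 0 2 x p + Cij 3 a 1 2 x p

section Casimir

variable (a : Fin 3 → ℝ) {x p : Fin 3 → ℝ}

theorem hasDerivAt_Csum_update_x (hx : ∀ i, x i ≠ 0) (k : Fin 3) :
    HasDerivAt (fun t => Csum a (update x k t) p)
      (dCij 3 a 0 1 x p (Pi.single k 1) 0 + dCij 3 a 0 2 x p (Pi.single k 1) 0 +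
        dCij 3 a 1 2 x p (Pi.single k 1) 0) (x k) :=
  ((hasDerivAt_Cij_update_x a 0 1 (hx 0) (hx 1) k).add
    (hasDerivAt_Cij_update_x a 0 2 (hx 0) (hx 2) k)).add
    (hasDerivAt_Cij_update_x a 1 2 (hx 1) (hx 2) k)

theorem hasDerivAt_Csum_update_p (hx : ∀ i, x i ≠ 0) (k : Fin 3) :
    HasDerivAt (fun t => Csum a x (update p k t))
      (dCij 3 a 0 1 x p 0 (Pi.single k 1) + dCij 3 a 0 2 x p 0 (Pi.single k 1) +
        dCij 3 a 1 2 x p 0 (Pi.single k 1)) (p k) :=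
  ((hasDerivAt_Cij_update_p a 0 1 (hx 0) (hx 1) k).add
    (hasDerivAt_Cij_update_p a 0 2 (hx 0) (hx 2) k)).add
    (hasDerivAt_Cij_update_p a 1 2 (hx 1) (hx 2) k)

theorem pb_Cij_Csum (hx : ∀ i, x i ≠ 0) (i j : Fin 3) :
    pb 3 (Cij 3 a i j) (Csum a) x p = 0 := by
  rw [pb_eq_sum_of_hasDerivAt (hasDerivAt_Cij_update_x a i j (hx i) (hx j))
    (hasDerivAt_Cij_update_p a i j (hx i) (hx j)) (hasDerivAt_Csum_update_x a hx)
    (hasDerivAt_Csum_update_p a hx)]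
  have := hx 0; have := hx 1; have := hx 2
  fin_cases i <;> fin_cases j <;>
    simp only [Fin.sum_univ_three, dCij, Pi.single_apply, Pi.zero_apply, Fin.zero_eta, Fin.mk_one,
      Fin.reduceFinMk, Fin.isValue, Fin.reduceEq, ↓reduceIte] <;>
    field_simp <;> ring

theorem pb_Cij_Csum_sub_Cij (hx : ∀ i, x i ≠ 0) (i j : Fin 3) :
    pb 3 (Cij 3 a i j) (fun x p => Csum a x p - Cij 3 a i j x p) x p = 0 := by
  rw [pb_sub_right (fun k => (hasDerivAt_Csum_update_x a hx k).differentiableAt)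
    (fun k => (hasDerivAt_Csum_update_p a hx k).differentiableAt)
    (fun k => (hasDerivAt_Cij_update_x a i j (hx i) (hx j) k).differentiableAt)
    (fun k => (hasDerivAt_Cij_update_p a i j (hx i) (hx j) k).differentiableAt),
    pb_Cij_Csum a hx, pb_self, sub_zero]

end Casimir

theorem stmt12 (a : Fin 3 → ℝ) (x p : Fin 3 → ℝ) (hx : ∀ i, x i ≠ 0) :
    pb 3 (Cij 3 a 1 2) (fun x p => Cij 3 a 0 1 x p + Cij 3 a 0 2 x p) x p = 0 ∧
    pb 3 (Cij 3 a 0 1) (fun x p => Cij 3 a 0 2 x p + Cij 3 a 1 2 x p) x p = 0 ∧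
    pb 3 (Cij 3 a 0 2) (fun x p => Cij 3 a 0 1 x p + Cij 3 a 1 2 x p) x p = 0 := by
  have h := pb_Cij_Csum_sub_Cij a (p := p) hx
  refine ⟨?_, ?_, ?_⟩
  · convert h 1 2 using 2
    funext y q
    simp only [Csum]
    ring
  · convert h 0 1 using 2
    funext y q
    simp only [Csum]
    ring
  · convert h 0 2 using 2
    funext y q
    simp only [Csum]
    ring
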